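/- Let M be a connected matroid of rank r on the ground set {1,…,n}, let B_1, …, B_n be bases of M, let X = (X_1, …, X_n) be the list of their incidence vectors X_a = e_{B_a} ∈ ℤ^n, and suppose X_1, …, X_n are linearly independent (over ℚ). If the graph G(X) is connected, then |det(X)| = r, where X is viewed as the n × n integer matrix with rows X_1, …, X_n. -/

import Mathlib

/-!
Every row of `X` has coordinate sum `r`, i.e. `X 1 = r 1`. Let `L ⊆ ℤⁿ` be the lattice spanned by
the rows. For fixed `s`, the indicator `v` of `{t | e_s - e_t ∈ L}` takes equal values at the two
ends of every root `e_u - e_w ∈ L`, in particular of every edge `X a - X b` of `G(X)`; as `G(X)` is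
connected, `X v` is a constant vector, and nonsingularity of `X` forces `v` itself to be constant.
So `L` contains all roots, hence is also spanned by the `e_j - e_k` (`j ≠ k`) together with
`r e_k`: the rows of a matrix that differs from the identity only in column `k`, with determinant
`r`. Square matrices whose rows span the same lattice have determinants dividing each other.
-/

/-- The `0/1` incidence vector (in `ℤ^n`) of a subset `B` of `{1,…,n}`. -/
noncomputable def incVec {n : ℕ} (B : Set (Fin n)) : Fin n → ℤ :=
  B.indicator 1

/-- A circuit of a matroid: an inclusion-minimal dependent set, i.e. a dependent set all of
whose proper subsets are independent. -/
def Matroid.IsCircuit' {α : Type*} (M : Matroid α) (C : Set α) : Prop :=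
  M.Dep C ∧ ∀ D : Set α, D ⊂ C → M.Indep D

/-- A matroid is connected if every two distinct elements of its ground set lie in a common
circuit. -/
def Matroid.ConnectedMatroid {α : Type*} (M : Matroid α) : Prop :=
  ∀ x ∈ M.E, ∀ y ∈ M.E, x ≠ y → ∃ C : Set α, M.IsCircuit' C ∧ x ∈ C ∧ y ∈ C

/-- The graph `G(X)` on vertex set `{1,…,n}` associated to a list `X` of `n` vectors in `ℤ^n`:
vertices `a ≠ b` are adjacent iff `X a - X b = e_s - e_t` for some standard unit vectors
`e_s ≠ e_t`. -/
def Ggraph {n : ℕ} (X : Fin n → Fin n → ℤ) : SimpleGraph (Fin n) :=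
  SimpleGraph.fromRel fun a b =>
    ∃ s t : Fin n, s ≠ t ∧ X a - X b = Pi.single s 1 - Pi.single t 1

/-- The graph `g(X)` on vertex set `{1,…,n}` associated to a list `X` of `n` vectors in `ℤ^n`:
vertices `s ≠ t` are adjacent iff `X a - X b = e_s - e_t` for some indices `a`, `b`. -/
def ggraph {n : ℕ} (X : Fin n → Fin n → ℤ) : SimpleGraph (Fin n) :=
  SimpleGraph.fromRel fun s t =>
    ∃ a b : Fin n, X a - X b = Pi.single s 1 - Pi.single t 1

open Matrix Submodule

lemma sum_incVec {n : ℕ} (B : Set (Fin n)) : ∑ i, incVec B i = B.ncard := by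
  classical
  simp [incVec, Set.indicator_apply, Set.ncard_eq_toFinset_card']

lemma SimpleGraph.Preconnected.apply_eq_of_forall_adj {V β : Type*} {G : SimpleGraph V}
    (hG : G.Preconnected) {f : V → β} (hf : ∀ a b, G.Adj a b → f a = f b) (a b : V) :
    f a = f b :=
  (hG a b).elim fun w => by
    induction w with
    | nil => rfl
    | cons h _ ih => exact (hf _ _ h).trans ih

lemma exists_sub_eq_single_sub_single_of_Ggraph_adj {n : ℕ} {X : Fin n → Fin n → ℤ} {a b : Fin n}
    (h : (Ggraph X).Adj a b) :
    ∃ s t : Fin n, X a - X b = Pi.single s 1 - Pi.single t 1 := by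
  obtain ⟨-, ⟨s, t, -, hst⟩ | ⟨s, t, -, hst⟩⟩ := h
  · exact ⟨s, t, hst⟩
  · exact ⟨t, s, by rw [← neg_sub, hst, neg_sub]⟩

lemma eq_sum_smul_single_sub_single_add {ι R : Type*} [Fintype ι] [DecidableEq ι] [Ring R]
    (v : ι → R) (k : ι) :
    v = ∑ j, v j • (Pi.single j 1 - Pi.single k 1) + (∑ j, v j) • Pi.single k 1 := by
  simp only [smul_sub, Finset.sum_sub_distrib, Finset.sum_smul, sub_add_cancel]
  exact pi_eq_sum_univ' v

namespace Matrix

variable {ι R : Type*} [DecidableEq ι]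

lemma det_ne_zero_of_linearIndependent_intCast_rows [Fintype ι] {X : Matrix ι ι ℤ}
    (h : LinearIndependent ℚ fun a i => (X a i : ℚ)) : X.det ≠ 0 := by
  have hunit : IsUnit (X.map ((↑) : ℤ → ℚ)).det :=
    (isUnit_iff_isUnit_det _).mp (linearIndependent_rows_iff_isUnit.mp h)
  rw [← Int.cast_det, isUnit_iff_ne_zero] at hunit
  exact_mod_cast hunit

lemma apply_eq_of_mulVec_eq_const [Fintype ι] [CommRing R] [IsDomain R] {X : Matrix ι ι R}
    (hX : X.det ≠ 0) {r c : R} (hrow : X *ᵥ 1 = Function.const ι r) {v : ι → R}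
    (hv : X *ᵥ v = Function.const ι c) (i j : ι) : v i = v j := by
  have hker : ∀ w, X *ᵥ w = 0 → w = 0 := fun w hw => by
    by_contra hw0
    exact hX (exists_mulVec_eq_zero_iff.mp ⟨w, hw0, hw⟩)
  have hr : r ≠ 0 := by
    rintro rfl
    exact one_ne_zero (congrFun (hker 1 hrow) i)
  have hrv : r • v = c • 1 := by
    refine sub_eq_zero.mp (hker _ ?_)
    rw [mulVec_sub, mulVec_smul, mulVec_smul, hv, hrow]
    ext
    simp [mul_comm]
  have hi := congrFun hrv i
  have hj := congrFun hrv j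
  simp only [Pi.smul_apply, smul_eq_mul, Pi.one_apply, mul_one] at hi hj
  exact mul_left_cancel₀ hr (hi.trans hj.symm)

lemma det_dvd_det_of_span_rows_le [Fintype ι] [CommRing R] {A B : Matrix ι ι R}
    (h : span R (Set.range A) ≤ span R (Set.range B)) : B.det ∣ A.det := by
  choose U hU using fun a => (mem_span_range_iff_exists_fun R).mp (h (subset_span ⟨a, rfl⟩))
  have hAUB : A = of U * B := by
    ext a i
    rw [← hU a]
    simp [mul_apply]
  exact ⟨(of U).det, by rw [hAUB, det_mul, mul_comm]⟩

def rootMatrix [Ring R] (k : ι) (r : R) : Matrix ι ι R :=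
  of fun j => if j = k then r • Pi.single k 1 else Pi.single j 1 - Pi.single k 1

lemma rootMatrix_self [Ring R] (k : ι) (r : R) : rootMatrix k r k = r • Pi.single k 1 :=
  if_pos rfl

lemma rootMatrix_of_ne [Ring R] {j k : ι} (r : R) (h : j ≠ k) :
    rootMatrix k r j = Pi.single j 1 - Pi.single k 1 :=
  if_neg h

lemma det_rootMatrix [Fintype ι] [CommRing R] (k : ι) (r : R) : (rootMatrix k r).det = r := by
  have h : rootMatrix k r = (1 : Matrix ι ι R).updateCol k (Function.update (-1) k r) := by
    ext j i
    rw [updateCol_apply, rootMatrix, of_apply]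
    obtain rfl | hj := eq_or_ne j k
    · by_cases hi : i = j <;> simp [hi, Ne.symm]
    · by_cases hi : i = k
      · simp [hi, hj]
      · simp [one_apply, Pi.single_apply, hi, hj, eq_comm (a := i)]
  rw [h, ← cramer_apply, cramer_one]
  simp

lemma span_rows_eq_span_rootMatrix [Fintype ι] [CommRing R] {X : Matrix ι ι R} {r : R}
    (hrow : ∀ a, ∑ i, X a i = r)
    (hroots : ∀ j k : ι, (Pi.single j 1 - Pi.single k 1 : ι → R) ∈ span R (Set.range X))
    (k : ι) : span R (Set.range X) = span R (Set.range (rootMatrix k r)) := by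
  have hroot_mem : ∀ j, (Pi.single j 1 - Pi.single k 1 : ι → R) ∈
      span R (Set.range (rootMatrix k r)) := fun j => by
    obtain rfl | hj := eq_or_ne j k
    · simp
    · exact subset_span ⟨j, rootMatrix_of_ne r hj⟩
  have hlast_mem : r • (Pi.single k 1 : ι → R) ∈ span R (Set.range (rootMatrix k r)) :=
    subset_span ⟨k, rootMatrix_self k r⟩
  refine le_antisymm (span_le.mpr ?_) (span_le.mpr ?_)
  · rintro _ ⟨a, rfl⟩
    rw [eq_sum_smul_single_sub_single_add (X a) k, hrow]
    exact add_mem (sum_mem fun j _ => smul_mem _ _ (hroot_mem j)) hlast_mem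
  · rintro _ ⟨j, rfl⟩
    obtain rfl | hj := eq_or_ne j k
    · have hXj := eq_sum_smul_single_sub_single_add (X j) j
      rw [hrow, ← sub_eq_iff_eq_add'] at hXj
      rw [rootMatrix_self, ← hXj]
      exact sub_mem (subset_span ⟨j, rfl⟩) (sum_mem fun i _ => smul_mem _ _ (hroots i j))
    · exact rootMatrix_of_ne r hj ▸ hroots j k

end Matrix

lemma single_sub_single_mem_span_rows_of_Ggraph_preconnected {n : ℕ}
    {X : Matrix (Fin n) (Fin n) ℤ} (hX : X.det ≠ 0) {r : ℤ} (hrow : ∀ a, ∑ i, X a i = r)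
    (hG : (Ggraph X).Preconnected) (s t : Fin n) :
    (Pi.single s 1 - Pi.single t 1 : Fin n → ℤ) ∈ span ℤ (Set.range X) := by
  classical
  set L := span ℤ (Set.range X)
  let v : Fin n → ℤ := fun i => if (Pi.single s 1 - Pi.single i 1 : Fin n → ℤ) ∈ L then 1 else 0
  have hv : ∀ u w : Fin n, (Pi.single u 1 - Pi.single w 1 : Fin n → ℤ) ∈ L → v u = v w := by
    intro u w huw
    have hsw : Pi.single s 1 - Pi.single w 1 = (Pi.single s 1 - Pi.single u 1) +
        (Pi.single u 1 - Pi.single w 1 : Fin n → ℤ) := by abel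
    simp only [v, hsw, L.add_mem_iff_left huw]
  have hXv : ∀ a b, (Ggraph X).Adj a b → (X *ᵥ v) a = (X *ᵥ v) b := by
    intro a b hab
    obtain ⟨u, w, huw⟩ := exists_sub_eq_single_sub_single_of_Ggraph_adj hab
    have hmem : Pi.single u 1 - Pi.single w 1 ∈ L :=
      huw ▸ sub_mem (subset_span ⟨a, rfl⟩) (subset_span ⟨b, rfl⟩)
    rw [← sub_eq_zero, mulVec, mulVec, ← sub_dotProduct]
    change (X a - X b) ⬝ᵥ v = 0
    simp [huw, sub_dotProduct, hv u w hmem]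
  have hconst : X *ᵥ v = Function.const _ ((X *ᵥ v) s) :=
    funext fun a => hG.apply_eq_of_forall_adj hXv a s
  have hrow' : X *ᵥ 1 = Function.const _ r := funext fun a => by simp [mulVec, dotProduct, hrow]
  have hts := apply_eq_of_mulVec_eq_const hX hrow' hconst t s
  simpa [v] using hts

theorem det_eq_rank_of_Ggraph_connected_general (n r : ℕ)
    (M : Matroid (Fin n))
    (hrank : ∀ B : Set (Fin n), M.IsBase B → B.ncard = r)
    (B : Fin n → Set (Fin n)) (hB : ∀ a : Fin n, M.IsBase (B a))
    (hli : LinearIndependent ℚ fun a : Fin n => fun i : Fin n => (incVec (B a) i : ℚ))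
    (hG : (Ggraph fun a => incVec (B a)).Connected) :
    (Matrix.of fun a i : Fin n => incVec (B a) i).det.natAbs = r := by
  set X : Matrix (Fin n) (Fin n) ℤ := Matrix.of fun a i => incVec (B a) i
  have hX : X.det ≠ 0 := det_ne_zero_of_linearIndependent_intCast_rows hli
  have hrow : ∀ a, ∑ i, X a i = r := fun a => by simp [X, sum_incVec, hrank _ (hB a)]
  obtain ⟨k⟩ := hG.nonempty
  have hspan := span_rows_eq_span_rootMatrix hrow
    (single_sub_single_mem_span_rows_of_Ggraph_preconnected hX hrow hG.preconnected) k
  rw [Int.natAbs_eq_of_dvd_dvd (det_dvd_det_of_span_rows_le hspan.ge)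
    (det_dvd_det_of_span_rows_le hspan.le), det_rootMatrix, Int.natAbs_natCast]

/-- If `M` is a connected matroid of rank `r` on `{1,…,n}`,
`X = (X_1,…,X_n)` is a linearly independent (over `ℚ`) list of incidence vectors of bases of
`M`, and the graph `G(X)` is connected, then `|det X| = r`. -/
theorem det_eq_rank_of_Ggraph_connected (n r : ℕ)
    (M : Matroid (Fin n)) (hE : M.E = Set.univ)
    (hrank : ∀ B : Set (Fin n), M.IsBase B → B.ncard = r)
    (hconn : M.ConnectedMatroid)
    (B : Fin n → Set (Fin n)) (hB : ∀ a : Fin n, M.IsBase (B a))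
    (hli : LinearIndependent ℚ fun a : Fin n => fun i : Fin n => (incVec (B a) i : ℚ))
    (hG : (Ggraph fun a => incVec (B a)).Connected) :
    (Matrix.of fun a i : Fin n => incVec (B a) i).det.natAbs = r :=
  det_eq_rank_of_Ggraph_connected_general n r M hrank B hB hli hG
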